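/- arXiv:1101.0379 — 2 statements merged into one kernel-verified Lean document; each statement's English description precedes it below -/
import Mathlib

section
/- Let n ≥ 1, m ∈ ℕ, and set N(z) = π^{-n} Γ(n+m)/(Γ(m+1) Γ(n)) e^{|z|²} and K_m(z,w) := π^{-n} e^{⟨z,w⟩} L_m^{(n-1)}(|z-w|²). Then for every φ ∈ L²(C^n, dμ) and every z ∈ C^n, the lower symbol (expectation value over the coherent state at z) satisfies N(z)^{-1} ∫_{C^n} |K_m(z,w)|² e^{-|w|²} φ(w) dμ(w) = (m!/((n)_m π^n)) ∫_{C^n} e^{-|z-w|²} (L_m^{(n-1)}(|z-w|²))² φ(w) dμ(w); that is, the Berezin transform of φ is B_m[φ](z) = (m!/((n)_m π^n)) ∫_{C^n} e^{-|z-w|²} (L_m^{(n-1)}(|z-w|²))² φ(w) dμ(w). -/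
open MeasureTheory Finset
open scoped Real ComplexConjugate

noncomputable section

/-- Generalized Laguerre polynomial `L_k^{(α)}(x) = ∑_{i=0}^k (-1)^i C(k+α, k-i) x^i / i!`
(here with natural parameter `α`). -/
def lag (k α : ℕ) (x : ℝ) : ℝ :=
  ∑ i ∈ Finset.range (k + 1),
    (-1 : ℝ) ^ i * ((k + α).choose (k - i)) * x ^ i / (i.factorial)

/-- The complex Euclidean space `ℂⁿ`. -/
abbrev En (n : ℕ) := EuclideanSpace ℂ (Fin n)

instance (n : ℕ) : MeasurableSpace (En n) := borel _
instance (n : ℕ) : BorelSpace (En n) := ⟨rfl⟩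

/-- The normalization factor `N(z) = π⁻ⁿ Γ(n+m)/(Γ(m+1)Γ(n)) e^{|z|²}`. -/
def normFactor (n m : ℕ) (z : En n) : ℝ :=
  (π ^ n)⁻¹ * (Real.Gamma ((n : ℝ) + m) / (Real.Gamma ((m : ℝ) + 1) * Real.Gamma (n : ℝ))) *
    Real.exp (‖z‖ ^ 2)

/-- The reproducing kernel `K_m(z,w) = π⁻ⁿ e^{⟨z,w⟩} L_m^{(n-1)}(|z-w|²)`,
where `⟨z,w⟩ = ∑_j z_j conj(w_j)`. -/
def Kker (n m : ℕ) (z w : En n) : ℂ :=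
  ((π ^ n)⁻¹ : ℝ) * Complex.exp (∑ j, z j * conj (w j)) *
    ((lag m (n - 1) (‖z - w‖ ^ 2) : ℝ) : ℂ)


lemma poch_gamma (n m : ℕ) (hn : 1 ≤ n) :
    (ascPochhammer ℝ m).eval (n : ℝ) * Real.Gamma (n : ℝ) = Real.Gamma ((n : ℝ) + m) := by
  have hn1 : (1:ℝ) ≤ (n:ℝ) := by exact_mod_cast hn
  induction m with
  | zero => simp
  | succ k ih =>
    have hpos : (0:ℝ) < (n:ℝ) + k := by
      have : (0:ℝ) ≤ (k:ℝ) := Nat.cast_nonneg k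
      linarith
    have hstep : ((n:ℝ) + (k+1 : ℕ)) = ((n:ℝ) + k) + 1 := by push_cast; ring
    rw [ascPochhammer_succ_right]
    simp only [Polynomial.eval_mul, Polynomial.eval_add, Polynomial.eval_X,
      Polynomial.eval_natCast]
    rw [hstep, Real.Gamma_add_one (ne_of_gt hpos), ← ih]
    ring

/-- Expression of the lower symbol (expectation value over coherent states):
for every `φ ∈ L²(ℂⁿ, dμ)` and every `z ∈ ℂⁿ`,
`N(z)⁻¹ ∫ |K_m(z,w)|² e^{-|w|²} φ(w) dμ(w)
  = (m!/((n)_m πⁿ)) ∫ e^{-|z-w|²} (L_m^{(n-1)}(|z-w|²))² φ(w) dμ(w)`,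
i.e. the Berezin transform of `φ` is the right-hand side. -/
theorem lower_symbol_berezin (n m : ℕ) (hn : 1 ≤ n) (φ : En n → ℂ)
    (hφ : MemLp φ 2 (volume : Measure (En n))) (z : En n) :
    ((normFactor n m z : ℝ) : ℂ)⁻¹ *
        ∫ w : En n, ((‖Kker n m z w‖ ^ 2 * Real.exp (-‖w‖ ^ 2) : ℝ) : ℂ) * φ w =
      (((m.factorial : ℝ) / ((ascPochhammer ℝ m).eval (n : ℝ) * π ^ n) : ℝ) : ℂ) *
        ∫ w : En n,
          ((Real.exp (-‖z - w‖ ^ 2) * (lag m (n - 1) (‖z - w‖ ^ 2)) ^ 2 : ℝ) : ℂ) * φ w := by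
  have hπ : (0:ℝ) < π ^ n := by positivity
  have hn1 : (1:ℝ) ≤ (n:ℝ) := by exact_mod_cast hn
  have hΓn : (0:ℝ) < Real.Gamma (n:ℝ) := Real.Gamma_pos_of_pos (by linarith)
  have hΓnm : (0:ℝ) < Real.Gamma ((n:ℝ) + m) :=
    Real.Gamma_pos_of_pos (by have : (0:ℝ) ≤ (m:ℝ) := Nat.cast_nonneg m; linarith)
  have hΓm : Real.Gamma ((m:ℝ) + 1) = (m.factorial : ℝ) := Real.Gamma_nat_eq_factorial m
  have hpoch := poch_gamma n m hn
  have hpochpos : (0:ℝ) < (ascPochhammer ℝ m).eval (n : ℝ) := by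
    have := hpoch
    nlinarith [hΓn, hΓnm]
  rw [← MeasureTheory.integral_const_mul, ← MeasureTheory.integral_const_mul]
  refine MeasureTheory.integral_congr_ae (Filter.Eventually.of_forall fun w => ?_)
  set L := lag m (n - 1) (‖z - w‖ ^ 2) with hLdef
  set r := RCLike.re (inner ℂ z w : ℂ) with hrdef
  have hre : (∑ j, z j * conj (w j)).re = r := by
    have h1 : (∑ j, z j * conj (w j)) = conj (inner ℂ z w : ℂ) := by
      simp [PiLp.inner_apply, RCLike.inner_apply, map_sum, mul_comm]
    rw [h1, Complex.conj_re, hrdef, RCLike.re_to_complex]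
  have hnorm : ‖z - w‖ ^ 2 = ‖z‖^2 - 2 * r + ‖w‖^2 := norm_sub_sq z w
  have hexp : Real.exp (‖z‖^2) * Real.exp (-‖z - w‖^2)
      = Real.exp (2 * r) * Real.exp (-‖w‖^2) := by
    rw [← Real.exp_add, ← Real.exp_add, hnorm]; ring_nf
  have hexp2 : Real.exp r ^ 2 = Real.exp (2 * r) := by
    rw [sq, ← Real.exp_add]; ring_nf
  have habs : ‖Kker n m z w‖ ^ 2 * Real.exp (-‖w‖ ^ 2)
      = ((π ^ n)⁻¹) ^ 2 * (Real.exp (2 * r) * Real.exp (-‖w‖^2)) * L ^ 2 := by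
    rw [Kker, norm_mul, norm_mul, Complex.norm_exp, Complex.norm_real, Complex.norm_real,
      Real.norm_eq_abs, Real.norm_eq_abs,
      hre, abs_of_pos (by positivity : (0:ℝ) < (π^n)⁻¹), mul_pow, mul_pow, sq_abs, hexp2,
      ← hLdef]
    ring
  have hreal : (normFactor n m z)⁻¹ * (‖Kker n m z w‖ ^ 2 * Real.exp (-‖w‖ ^ 2))
      = ((m.factorial : ℝ) / ((ascPochhammer ℝ m).eval (n : ℝ) * π ^ n)) *
        (Real.exp (-‖z - w‖ ^ 2) * L ^ 2) := by
    rw [habs, normFactor, hΓm, ← hpoch, ← hexp]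
    have he : Real.exp (‖z‖^2) ≠ 0 := Real.exp_ne_zero _
    field_simp
  calc ((normFactor n m z : ℝ) : ℂ)⁻¹ *
        (((‖Kker n m z w‖ ^ 2 * Real.exp (-‖w‖ ^ 2) : ℝ) : ℂ) * φ w)
      = (((normFactor n m z)⁻¹ *
          (‖Kker n m z w‖ ^ 2 * Real.exp (-‖w‖ ^ 2)) : ℝ) : ℂ) * φ w := by
        push_cast; ring
    _ = ((((m.factorial : ℝ) / ((ascPochhammer ℝ m).eval (n : ℝ) * π ^ n)) *
          (Real.exp (-‖z - w‖ ^ 2) * L ^ 2) : ℝ) : ℂ) * φ w := by rw [hreal]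
    _ = (((m.factorial : ℝ) / ((ascPochhammer ℝ m).eval (n : ℝ) * π ^ n) : ℝ) : ℂ) *
        (((Real.exp (-‖z - w‖ ^ 2) * (lag m (n - 1) (‖z - w‖ ^ 2)) ^ 2 : ℝ) : ℂ) * φ w) := by
        rw [← hLdef]; push_cast; ring


end
end

section
/- Let n ≥ 1 and m ∈ ℕ. Then for every real x, (L_m^{(n-1)}(x))² = Σ_{j=0}^{2m} γ_j^{(n,m)} x^j / j!, where γ_j^{(n,m)} = (-1)^j Σ_{s=0}^{j} C(j,s) C(m+n-1, m-j+s) C(m+n-1, m-s). -/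
open Finset

noncomputable section

/-- Binomial coefficient `C(N, k)` with integer lower index, equal to `0` when `k < 0`. -/
def chooseZ (N : ℕ) (k : ℤ) : ℕ := if 0 ≤ k then N.choose k.toNat else 0

/-- The coefficients `γ_j^{(n,m)} = (-1)^j ∑_{s=0}^j C(j,s) C(m+n-1, m-j+s) C(m+n-1, m-s)`. -/
def gammaCoef (n m j : ℕ) : ℝ :=
  (-1 : ℝ) ^ j * ∑ s ∈ Finset.range (j + 1),
    (j.choose s : ℝ) * (chooseZ (m + n - 1) ((m : ℤ) - j + s) : ℝ) *
      (chooseZ (m + n - 1) ((m : ℤ) - s) : ℝ)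

/-- For `n ≥ 1`, `m ∈ ℕ` and every real `x`,
`(L_m^{(n-1)}(x))² = ∑_{j=0}^{2m} γ_j^{(n,m)} x^j / j!`. -/
theorem laguerre_sq_expansion (n m : ℕ) (hn : 1 ≤ n) (x : ℝ) :
    (lag m (n - 1) x) ^ 2 =
      ∑ j ∈ Finset.range (2 * m + 1), gammaCoef n m j * x ^ j / (j.factorial) := by
  set M := m + n - 1 with hM
  have hMn : m + (n - 1) = M := by omega
  set b : ℕ → ℝ := fun i => (-1 : ℝ) ^ i * (chooseZ M ((m : ℤ) - i)) / i.factorial with hb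
  have hb_zero : ∀ i, m < i → b i = 0 := by
    intro i hi
    have h0 : ¬ (0 : ℤ) ≤ (m : ℤ) - i := by omega
    have hc : chooseZ M ((m : ℤ) - i) = 0 := by rw [chooseZ, if_neg h0]
    simp [hb, hc]
  have hb_eq : ∀ i ≤ m, b i = (-1 : ℝ) ^ i * (M.choose (m - i)) / i.factorial := by
    intro i hi
    have h0 : (0 : ℤ) ≤ (m : ℤ) - i := by omega
    have h1 : ((m : ℤ) - i).toNat = m - i := by omega
    simp [hb, chooseZ, h0, h1, hi]
  set P : Polynomial ℝ := ∑ i ∈ Finset.range (m + 1), Polynomial.C (b i) * Polynomial.X ^ i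
    with hP
  have hcoeff : ∀ k, P.coeff k = b k := by
    intro k
    rw [hP, Polynomial.finset_sum_coeff]
    simp only [Polynomial.coeff_C_mul, Polynomial.coeff_X_pow, mul_ite, mul_one, mul_zero]
    rw [Finset.sum_ite_eq (Finset.range (m + 1)) k b]
    by_cases h : k ∈ Finset.range (m + 1)
    · simp [h]
    · simp only [h, if_false]
      exact (hb_zero k (by simp at h; omega)).symm
  have hdeg : P.natDegree ≤ m := by
    apply Polynomial.natDegree_sum_le_of_forall_le
    intro i hi
    have h1 : (Polynomial.C (b i) * Polynomial.X ^ i).natDegree ≤ i :=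
      le_trans (Polynomial.natDegree_C_mul_le _ _) (le_of_eq (Polynomial.natDegree_X_pow i))
    exact h1.trans (by simp at hi; omega)
  have hevalP : P.eval x = lag m (n - 1) x := by
    rw [lag, hMn, hP]
    rw [Polynomial.eval_finset_sum]
    refine Finset.sum_congr rfl fun i hi => ?_
    rw [hb_eq i (by simp at hi; omega)]
    simp
    ring
  have hdeg2 : (P * P).natDegree < 2 * m + 1 := by
    have h1 := Polynomial.natDegree_mul_le (p := P) (q := P)
    omega
  have key : (lag m (n - 1) x) ^ 2 = (P * P).eval x := by
    rw [Polynomial.eval_mul, hevalP]; ring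
  rw [key, Polynomial.eval_eq_sum_range' hdeg2]
  refine Finset.sum_congr rfl fun j hj => ?_
  have hcoeffmul : (P * P).coeff j = gammaCoef n m j / j.factorial := by
    rw [Polynomial.coeff_mul, Finset.Nat.sum_antidiagonal_eq_sum_range_succ_mk]
    rw [gammaCoef]
    rw [Finset.mul_sum, Finset.sum_div]
    refine Finset.sum_congr rfl fun s hs => ?_
    have hsj : s ≤ j := by simp at hs; omega
    simp only [hcoeff, hb]
    have hcast : ((j - s : ℕ) : ℤ) = (j : ℤ) - s := by omega
    have harg : (m : ℤ) - ((j - s : ℕ) : ℤ) = (m : ℤ) - j + s := by omega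
    rw [harg]
    have hsign : (-1 : ℝ) ^ s * (-1 : ℝ) ^ (j - s) = (-1 : ℝ) ^ j := by
      rw [← pow_add]; congr 1; omega
    have hfact : (j.choose s : ℝ) * (s.factorial : ℝ) * ((j - s).factorial : ℝ)
        = (j.factorial : ℝ) := by
      exact_mod_cast congrArg (Nat.cast : ℕ → ℝ)
        (Nat.choose_mul_factorial_mul_factorial hsj)
    have hs0 : (s.factorial : ℝ) ≠ 0 := by positivity
    have hjs0 : ((j - s).factorial : ℝ) ≠ 0 := by positivity
    have hj0 : (j.factorial : ℝ) ≠ 0 := by positivity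
    field_simp
    rw [← hsign, ← hfact]
    ring
  rw [hcoeffmul]
  ring


end
end
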